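/- If G is a connected simple graph on at least 3 vertices, then G^3 is Hamiltonian. -/

import Mathlib

def SimpleGraph.power {V : Type*} (G : SimpleGraph V) (n : ℕ) : SimpleGraph V where
  Adj v w := 1 ≤ G.dist v w ∧ G.dist v w ≤ n
  symm := ⟨fun v w h => by beta_reduce at h ⊢; rwa [SimpleGraph.dist_comm]⟩
  loopless := ⟨fun v h => by simp [SimpleGraph.dist_self] at h⟩

/-- A graph is Hamilton-connected if every pair of distinct vertices is joined
by a Hamiltonian path. -/
def SimpleGraph.IsHamiltonConnected {V : Type*} [DecidableEq V] (G : SimpleGraph V) : Prop :=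
  ∀ v w : V, v ≠ w → ∃ p : G.Walk v w, p.IsHamiltonian

/-- A graph is `k`-ordered if every sequence of `k` distinct vertices lies on a cycle
in the given cyclic order. -/
def SimpleGraph.IsKOrdered {V : Type*} (G : SimpleGraph V) (k : ℕ) : Prop :=
  ∀ v : Fin k → V, Function.Injective v →
    ∃ (a : V) (c : G.Walk a a), c.IsCycle ∧
      ∃ t : Fin k → ℕ, StrictMono t ∧ (∀ i, t i < c.length) ∧ ∀ i, c.getVert (t i) = v i

/-- A graph is `k`-ordered Hamiltonian if every sequence of `k` distinct vertices lies on a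
Hamiltonian cycle in the given cyclic order. -/
def SimpleGraph.IsKOrderedHamiltonian {V : Type*} [DecidableEq V] (G : SimpleGraph V) (k : ℕ) :
    Prop :=
  ∀ v : Fin k → V, Function.Injective v →
    ∃ (a : V) (c : G.Walk a a), c.IsHamiltonianCycle ∧
      ∃ t : Fin k → ℕ, StrictMono t ∧ (∀ i, t i < c.length) ∧ ∀ i, c.getVert (t i) = v i

namespace CubeHam

open SimpleGraph Walk

variable {V : Type*}

/-- Every connected finite graph has a spanning tree. -/
lemma exists_spanning_tree (n : ℕ) {V : Type*} [Fintype V] (G : SimpleGraph V)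
    (hn : G.edgeSet.ncard ≤ n) (hG : G.Connected) : ∃ T, T ≤ G ∧ T.IsTree := by
  classical
  induction n generalizing G with
  | zero =>
    refine ⟨G, le_rfl, hG, ?_⟩
    have hempty : G = ⊥ := by
      rw [← SimpleGraph.edgeSet_eq_empty]
      exact (Set.ncard_eq_zero G.edgeSet.toFinite).mp (Nat.le_zero.mp hn)
    rw [hempty]
    exact SimpleGraph.isAcyclic_bot
  | succ n ih =>
    by_cases hac : G.IsAcyclic
    · exact ⟨G, le_rfl, hG, hac⟩
    · rw [SimpleGraph.IsAcyclic] at hac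
      push_neg at hac
      obtain ⟨v, c, hc⟩ := hac
      cases c with
      | nil => exact absurd rfl hc.ne_nil
      | @cons _ w _ h q =>
        have hmem : s(v, w) ∈ (Walk.cons h q).edges := by
          rw [Walk.edges_cons]; exact List.mem_cons_self
        have hnb : ¬ G.IsBridge s(v, w) := fun hb =>
          (SimpleGraph.isBridge_iff_forall_cycle_notMem h).mp hb _ hc hmem
        rw [SimpleGraph.isBridge_iff] at hnb
        push_neg at hnb
        have hreach : (G \ SimpleGraph.fromEdgeSet {s(v, w)}).Reachable v w := hnb
        set G' := G \ SimpleGraph.fromEdgeSet {s(v, w)} with hG'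
        have hle : G' ≤ G := sdiff_le
        have hadjG' : ∀ a b : V, G.Adj a b → G'.Reachable a b := by
          intro a b hab
          by_cases he : s(a, b) = s(v, w)
          · rw [Sym2.eq_iff] at he
            rcases he with ⟨rfl, rfl⟩ | ⟨rfl, rfl⟩
            · exact hreach
            · exact hreach.symm
          · refine SimpleGraph.Adj.reachable ?_
            rw [hG', SimpleGraph.sdiff_adj]
            refine ⟨hab, ?_⟩
            rw [SimpleGraph.fromEdgeSet_adj]
            rintro ⟨hmem', -⟩
            exact he (Set.mem_singleton_iff.mp hmem')
        have hG'conn : G'.Connected := by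
          rw [SimpleGraph.connected_iff] at hG ⊢
          refine ⟨?_, hG.2⟩
          intro x y
          obtain ⟨p⟩ := hG.1 x y
          induction p with
          | nil => exact SimpleGraph.Reachable.refl _
          | cons hadj q ihq => exact (hadjG' _ _ hadj).trans ihq
        have hcard : G'.edgeSet.ncard ≤ n := by
          have hes : G'.edgeSet = G.edgeSet \ {s(v, w)} := by
            rw [hG']
            simp [SimpleGraph.edgeSet_sdiff, SimpleGraph.edgeSet_fromEdgeSet,
              SimpleGraph.edgeSet_sdiff_sdiff_isDiag]
          have hmemE : s(v, w) ∈ G.edgeSet := h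
          have := Set.ncard_diff_singleton_lt_of_mem hmemE G.edgeSet.toFinite
          rw [← hes] at this
          omega
        obtain ⟨T, hT1, hT2⟩ := ih G' hcard hG'conn
        exact ⟨T, hT1.trans hle, hT2⟩

section Tree

variable {T : SimpleGraph V}

/-- The unique path between two vertices of a tree. -/
noncomputable def tpath (hT : T.IsTree) (x y : V) : T.Walk x y :=
  (hT.existsUnique_path x y).exists.choose

lemma tpath_isPath (hT : T.IsTree) (x y : V) : (tpath hT x y).IsPath :=
  (hT.existsUnique_path x y).exists.choose_spec

lemma eq_tpath (hT : T.IsTree) {x y : V} {p : T.Walk x y} (hp : p.IsPath) :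
    p = tpath hT x y :=
  (hT.existsUnique_path x y).unique hp (tpath_isPath hT x y)

lemma tpath_support_subset [DecidableEq V] (hT : T.IsTree) {x y : V} (w : T.Walk x y) :
    (tpath hT x y).support ⊆ w.support := by
  rw [← eq_tpath hT w.bypass_isPath]
  exact w.support_bypass_subset

/-- If `v ∉ path(x,u)` then `u ∈ path(x,v)` (where `u ~ v`). -/
lemma exclusion [DecidableEq V] (hT : T.IsTree) {u v x : V} (huv : T.Adj u v)
    (hx : v ∉ (tpath hT x u).support) : u ∈ (tpath hT x v).support := by
  have hp := tpath_isPath hT x u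
  have hw : ((tpath hT x u).concat huv).IsPath := by
    rw [Walk.isPath_def, Walk.concat_eq_append, Walk.support_append]
    simp only [Walk.support_cons, Walk.support_nil, List.tail_cons]
    refine List.Nodup.append hp.support_nodup (List.nodup_singleton v) ?_
    intro z hz hz'
    rw [List.mem_singleton] at hz'
    subst hz'
    exact hx hz
  rw [← eq_tpath hT hw, Walk.concat_eq_append, Walk.support_append]
  exact List.mem_append_left _ ((tpath hT x u).end_mem_support)

/-- If `v ∈ path(x,u)` then `u ∉ path(x,v)`. -/
lemma dichotomy [DecidableEq V] (hT : T.IsTree) {u v x : V} (hne : u ≠ v)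
    (hx : v ∈ (tpath hT x u).support) : u ∉ (tpath hT x v).support := by
  intro hu'
  have hsplit := (tpath hT x u).take_spec hx
  have htake : (tpath hT x u).takeUntil v hx = tpath hT x v :=
    eq_tpath hT ((tpath_isPath hT x u).takeUntil hx)
  have hu1 : u ∈ ((tpath hT x u).takeUntil v hx).support := by rw [htake]; exact hu'
  have hu2 : u ∈ ((tpath hT x u).dropUntil v hx).support.tail := by
    have h3 := ((tpath hT x u).dropUntil v hx).support_eq_cons
    have h4 := ((tpath hT x u).dropUntil v hx).end_mem_support
    rw [h3] at h4
    rcases List.mem_cons.mp h4 with h | h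
    · exact absurd h hne
    · exact h
  have hnd := (tpath_isPath hT x u).support_nodup
  rw [← hsplit, Walk.support_append] at hnd
  exact (List.disjoint_of_nodup_append hnd) hu1 hu2

/-- The set of vertices whose tree-path to `u` avoids `v` is closed under tree paths. -/
lemma closure_lemma [DecidableEq V] (hT : T.IsTree) {u v x y z : V}
    (hx : v ∉ (tpath hT x u).support) (hy : v ∉ (tpath hT y u).support)
    (hz : z ∈ (tpath hT x y).support) : v ∉ (tpath hT z u).support := by
  have h1 : v ∉ (tpath hT x y).support := by
    intro hv
    have := tpath_support_subset hT ((tpath hT x u).append (tpath hT y u).reverse) hv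
    rw [Walk.support_append, Walk.support_reverse] at this
    rcases List.mem_append.mp this with h | h
    · exact hx h
    · exact hy (List.mem_reverse.mp (List.mem_of_mem_tail h))
  have h2 : v ∉ (tpath hT x z).support := by
    rw [← eq_tpath hT ((tpath_isPath hT x y).takeUntil hz)]
    intro hv
    exact h1 ((tpath hT x y).support_takeUntil_subset hz hv)
  intro hv
  have := tpath_support_subset hT ((tpath hT x z).reverse.append (tpath hT x u)) hv
  rw [Walk.support_append, Walk.support_reverse] at this
  rcases List.mem_append.mp this with h | h
  · exact h2 (List.mem_reverse.mp h)
  · exact hx (List.mem_of_mem_tail h)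

end Tree

lemma power_adj {G T : SimpleGraph V} (hG : G.Connected) (hTG : T ≤ G) {x y : V}
    (hxy : x ≠ y) (w : T.Walk x y) (hw : w.length ≤ 3) : (G.power 3).Adj x y := by
  show 1 ≤ G.dist x y ∧ G.dist x y ≤ 3
  refine ⟨hG.pos_dist_of_ne hxy, ?_⟩
  refine le_trans (SimpleGraph.dist_le (w.mapLe hTG)) ?_
  simpa using hw

/-- Key lemma: in the cube of a spanning tree, any edge of the tree extends
to a path covering any tree-path-closed set containing both endpoints. -/
lemma tree_key [Fintype V] [DecidableEq V] {G T : SimpleGraph V} (hG : G.Connected)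
    (hTG : T ≤ G) (hT : T.IsTree) :
    ∀ (n : ℕ) (S : Finset V), S.card ≤ n →
      (∀ x ∈ S, ∀ y ∈ S, ∀ z ∈ (tpath hT x y).support, z ∈ S) →
      ∀ u v : V, u ∈ S → v ∈ S → T.Adj u v →
        ∃ p : (G.power 3).Walk u v, p.IsPath ∧ ∀ z, z ∈ p.support ↔ z ∈ S := by
  intro n
  induction n with
  | zero =>
    intro S hS _ u v hu _ _
    rw [Nat.le_zero, Finset.card_eq_zero] at hS
    simp [hS] at hu
  | succ n ih =>
    intro S hS hcl u v hu hv huv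
    classical
    have hne : u ≠ v := huv.ne
    set A : Finset V := S.filter (fun x => v ∉ (tpath hT x u).support) with hA
    set B : Finset V := S.filter (fun x => ¬ v ∉ (tpath hT x u).support) with hB
    have htuu : tpath hT u u = Walk.nil := by
      have hp := tpath_isPath hT u u
      rwa [Walk.isPath_iff_eq_nil] at hp
    have hvuu : v ∉ (tpath hT u u).support := by
      rw [htuu]; simp [hne.symm]
    have huA : u ∈ A := by rw [hA, Finset.mem_filter]; exact ⟨hu, hvuu⟩
    have hvB : v ∈ B := by
      rw [hB, Finset.mem_filter]
      exact ⟨hv, not_not_intro (Walk.start_mem_support _)⟩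
    have hAS : A ⊆ S := Finset.filter_subset _ _
    have hBS : B ⊆ S := Finset.filter_subset _ _
    have hdisj : ∀ z, z ∈ A → z ∈ B → False := fun z h1 h2 =>
      (Finset.mem_filter.mp h2).2 (Finset.mem_filter.mp h1).2
    have hunion : ∀ z ∈ S, z ∈ A ∨ z ∈ B := by
      intro z hz
      by_cases h : v ∉ (tpath hT z u).support
      · exact Or.inl (Finset.mem_filter.mpr ⟨hz, h⟩)
      · exact Or.inr (Finset.mem_filter.mpr ⟨hz, h⟩)
    have hvA : v ∉ A := fun h => hdisj v h hvB
    have huB : u ∉ B := fun h => hdisj u huA h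
    have hclA : ∀ x ∈ A, ∀ y ∈ A, ∀ z ∈ (tpath hT x y).support, z ∈ A := by
      intro x hx y hy z hz
      rw [hA, Finset.mem_filter] at hx hy ⊢
      exact ⟨hcl x hx.1 y hy.1 z hz, closure_lemma hT hx.2 hy.2 hz⟩
    have hclB : ∀ x ∈ B, ∀ y ∈ B, ∀ z ∈ (tpath hT x y).support, z ∈ B := by
      intro x hx y hy z hz
      rw [hB, Finset.mem_filter] at hx hy ⊢
      refine ⟨hcl x hx.1 y hy.1 z hz, ?_⟩
      have hxv : u ∉ (tpath hT x v).support := dichotomy hT hne (not_not.mp hx.2)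
      have hyv : u ∉ (tpath hT y v).support := dichotomy hT hne (not_not.mp hy.2)
      have hzv : u ∉ (tpath hT z v).support := closure_lemma hT hxv hyv hz
      exact not_not_intro (exclusion hT huv.symm hzv)
    have hcardA : A.card ≤ n := by
      have hlt : A.card < S.card :=
        Finset.card_lt_card ((Finset.ssubset_iff_of_subset hAS).mpr ⟨v, hv, hvA⟩)
      omega
    have hcardB : B.card ≤ n := by
      have hlt : B.card < S.card :=
        Finset.card_lt_card ((Finset.ssubset_iff_of_subset hBS).mpr ⟨u, hu, huB⟩)
      omega
    -- the A side: a path from u covering A, ending at u or at a tree-neighbour of u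
    obtain ⟨a, ha, haA, P_A, hP_Apath, hP_Asup⟩ :
        ∃ a : V, (a = u ∨ T.Adj a u) ∧ a ∈ A ∧ ∃ P : (G.power 3).Walk u a,
          P.IsPath ∧ ∀ z, z ∈ P.support ↔ z ∈ A := by
      by_cases hA1 : ∀ x ∈ A, x = u
      · refine ⟨u, Or.inl rfl, huA, Walk.nil, Walk.IsPath.nil, ?_⟩
        intro z
        simp only [Walk.support_nil, List.mem_singleton]
        exact ⟨fun h => h ▸ huA, fun h => hA1 z h⟩
      · push_neg at hA1
        obtain ⟨x0, hx0A, hx0u⟩ := hA1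
        obtain ⟨a, hadj, q, hq⟩ := Walk.exists_eq_cons_of_ne (Ne.symm hx0u) (tpath hT u x0)
        have haA : a ∈ A := by
          refine hclA u huA x0 hx0A a ?_
          rw [hq, Walk.support_cons]
          exact List.mem_cons_of_mem _ q.start_mem_support
        obtain ⟨P, hP, hPs⟩ := ih A hcardA hclA u a huA haA hadj
        exact ⟨a, Or.inr hadj.symm, haA, P, hP, hPs⟩
    -- the B side: a path from v covering B, ending at v or at a tree-neighbour of v
    obtain ⟨b, hb, hbB, P_B, hP_Bpath, hP_Bsup⟩ :
        ∃ b : V, (b = v ∨ T.Adj b v) ∧ b ∈ B ∧ ∃ P : (G.power 3).Walk v b,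
          P.IsPath ∧ ∀ z, z ∈ P.support ↔ z ∈ B := by
      by_cases hB1 : ∀ x ∈ B, x = v
      · refine ⟨v, Or.inl rfl, hvB, Walk.nil, Walk.IsPath.nil, ?_⟩
        intro z
        simp only [Walk.support_nil, List.mem_singleton]
        exact ⟨fun h => h ▸ hvB, fun h => hB1 z h⟩
      · push_neg at hB1
        obtain ⟨x0, hx0B, hx0v⟩ := hB1
        obtain ⟨b, hadj, q, hq⟩ := Walk.exists_eq_cons_of_ne (Ne.symm hx0v) (tpath hT v x0)
        have hbB : b ∈ B := by
          refine hclB v hvB x0 hx0B b ?_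
          rw [hq, Walk.support_cons]
          exact List.mem_cons_of_mem _ q.start_mem_support
        obtain ⟨P, hP, hPs⟩ := ih B hcardB hclB v b hvB hbB hadj
        exact ⟨b, Or.inr hadj.symm, hbB, P, hP, hPs⟩
    have hab : a ≠ b := fun h => hdisj a haA (h ▸ hbB)
    have hadj_ab : (G.power 3).Adj a b := by
      rcases ha with rfl | ha <;> rcases hb with rfl | hb
      · exact power_adj hG hTG hab (Walk.cons huv Walk.nil) (by simp)
      · exact power_adj hG hTG hab (Walk.cons huv (Walk.cons hb.symm Walk.nil)) (by simp)
      · exact power_adj hG hTG hab (Walk.cons ha (Walk.cons huv Walk.nil)) (by simp)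
      · exact power_adj hG hTG hab
          (Walk.cons ha (Walk.cons huv (Walk.cons hb.symm Walk.nil))) (by simp)
    refine ⟨P_A.append (Walk.cons hadj_ab P_B.reverse), ?_, ?_⟩
    · rw [Walk.isPath_def, Walk.support_append, Walk.support_cons, List.tail_cons,
        Walk.support_reverse]
      refine List.Nodup.append hP_Apath.support_nodup
        (List.nodup_reverse.mpr hP_Bpath.support_nodup) ?_
      intro z hz1 hz2
      exact hdisj z ((hP_Asup z).mp hz1) ((hP_Bsup z).mp (List.mem_reverse.mp hz2))
    · intro z
      rw [Walk.support_append, List.mem_append, Walk.support_cons, List.tail_cons,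
        Walk.support_reverse, List.mem_reverse, hP_Asup z, hP_Bsup z]
      constructor
      · rintro (h | h)
        · exact hAS h
        · exact hBS h
      · exact hunion z

lemma not_mem_edges_of_isPath {H : SimpleGraph V} {u v : V} (p : H.Walk u v)
    (hp : p.IsPath) (hlen : 2 ≤ p.length) : s(v, u) ∉ p.edges := by
  cases p with
  | nil => simp at hlen
  | @cons _ w _ h q =>
    intro hmem
    rw [Walk.edges_cons] at hmem
    have hq : q.IsPath ∧ u ∉ q.support := (Walk.cons_isPath_iff h q).mp hp
    rcases List.mem_cons.mp hmem with heq | hmem'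
    · rw [Sym2.eq_iff] at heq
      rcases heq with ⟨h1, h2⟩ | ⟨h1, h2⟩
      · subst h2
        exact h.ne rfl
      · subst h1
        have hqnil : q = Walk.nil := Walk.isPath_iff_eq_nil.mp hq.1
        subst hqnil
        simp [Walk.length_cons] at hlen
    · exact hq.2 (q.snd_mem_support_of_mem_edges hmem')

end CubeHam

theorem stmt_2 {V : Type*} [Fintype V] [DecidableEq V] (G : SimpleGraph V)
    (hG : G.Connected) (h3 : 3 ≤ Fintype.card V) :
    (G.power 3).IsHamiltonian := by
  classical
  obtain ⟨T, hTG, hT⟩ := CubeHam.exists_spanning_tree G.edgeSet.ncard G le_rfl hG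
  have hnt : Nontrivial V := Fintype.one_lt_card_iff_nontrivial.mp (by omega)
  obtain ⟨x, y, hxy⟩ := exists_pair_ne V
  obtain ⟨w⟩ := hT.isConnected x y
  obtain ⟨u', hadj, q, -⟩ := SimpleGraph.Walk.exists_eq_cons_of_ne hxy w
  obtain ⟨p, hp, hsup⟩ := CubeHam.tree_key hG hTG hT Finset.univ.card Finset.univ le_rfl
    (fun _ _ _ _ z _ => Finset.mem_univ z) x u' (Finset.mem_univ x) (Finset.mem_univ u') hadj
  have hall : ∀ z, z ∈ p.support := fun z => (hsup z).mpr (Finset.mem_univ z)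
  have hpham : p.IsHamiltonian := hp.isHamiltonian_of_mem hall
  have hlen : p.length = Fintype.card V - 1 := hpham.length_eq
  have hlen2 : 2 ≤ p.length := by omega
  have hadj' : (G.power 3).Adj u' x :=
    CubeHam.power_adj hG hTG hadj.ne.symm (SimpleGraph.Walk.cons hadj.symm SimpleGraph.Walk.nil)
      (by simp)
  have hcyc : (SimpleGraph.Walk.cons hadj' p).IsCycle := by
    rw [SimpleGraph.Walk.cons_isCycle_iff]
    exact ⟨hp, CubeHam.not_mem_edges_of_isPath p hp hlen2⟩
  have hham : (SimpleGraph.Walk.cons hadj' p).IsHamiltonianCycle := by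
    rw [SimpleGraph.Walk.isHamiltonianCycle_isCycle_and_isHamiltonian_tail]
    refine ⟨hcyc, ?_⟩
    intro z
    rw [SimpleGraph.Walk.support_tail_of_not_nil _ (by simp), SimpleGraph.Walk.support_cons,
      List.tail_cons]
    exact hpham z
  exact fun _ => ⟨u', SimpleGraph.Walk.cons hadj' p, hham⟩
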